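/- arXiv:2404.17109 — 8 statements merged into one kernel-verified Lean document; each statement's English description precedes it below -/
import Mathlib

section
/- Let g : ℝ^{n2} → ℝ be convex, Y ⊆ ℝ^{n2} a convex set, β > 0, τ > 0, r > 0, and fix x̃ ∈ ℝ^{n1}, y^k ∈ ℝ^{n2}, λ ∈ ℝ^m. Let D = τrβ I_{n2} − β BᵀB. Suppose ỹ ∈ Y minimizes the function y ↦ g(y) − λᵀBy + (β/2)‖Ax̃ + By − b‖² + (1/2)(y − y^k)ᵀD(y − y^k) over Y, and define λ̃ = λ − β(Ax̃ + By^k − b). Then for all y ∈ Y: g(y) − g(ỹ) + (y − ỹ)ᵀ(−Bᵀλ̃ + τrβ(ỹ − y^k)) ≥ 0. -/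
open Matrix

-- abstract key lemma
lemma key_vi {n : ℕ} (g : (Fin n → ℝ) → ℝ) (Y : Set (Fin n → ℝ))
    (hg : ConvexOn ℝ Set.univ g) (hY : Convex ℝ Y)
    (yt : Fin n → ℝ) (hytY : yt ∈ Y)
    (q φc c : (Fin n → ℝ) → ℝ) (hc : ∀ d, 0 ≤ c d)
    (hq : ∀ d s, q (yt + s • d) = q yt + s * φc d + s^2 * c d)
    (hmin : ∀ y ∈ Y, g yt + q yt ≤ g y + q y) :
    ∀ y ∈ Y, 0 ≤ g y - g yt + φc (y - yt) := by
  intro y hy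
  set d := y - yt with hd
  set E := g y - g yt + φc d with hE
  have step : ∀ s : ℝ, 0 < s → s ≤ 1 → 0 ≤ E + s * c d := by
    intro s hs hs1
    have hys : yt + s • d ∈ Y := by
      have : (1 - s) • yt + s • y ∈ Y :=
        hY hytY hy (by linarith) (le_of_lt hs) (by ring)
      have he : yt + s • d = (1 - s) • yt + s • y := by
        rw [hd]; module
      rwa [he]
    have hgys : g (yt + s • d) ≤ (1 - s) * g yt + s * g y := by
      have he : yt + s • d = (1 - s) • yt + s • y := by rw [hd]; module
      rw [he]
      have := hg.2 (Set.mem_univ yt) (Set.mem_univ y) (by linarith : (0:ℝ) ≤ 1 - s)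
        (le_of_lt hs) (by ring)
      simpa using this
    have h1 := hmin _ hys
    rw [hq d s] at h1
    have : 0 ≤ s * (g y - g yt) + s * φc d + s^2 * c d := by linarith
    have h2 : 0 ≤ s * (E + s * c d) := by rw [hE]; ring_nf; ring_nf at this; linarith
    nlinarith
  have : ∀ ε : ℝ, 0 < ε → 0 ≤ E + ε := by
    intro ε hε
    rcases le_or_gt (c d) 0 with h | h
    · have := step 1 one_pos le_rfl
      have hc0 : c d = 0 := le_antisymm h (hc d)
      rw [hc0] at this; linarith
    · set s := min 1 (ε / c d) with hs
      have hspos : 0 < s := lt_min one_pos (div_pos hε h)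
      have hsle : s ≤ 1 := min_le_left _ _
      have := step s hspos hsle
      have hsc : s * c d ≤ ε := by
        have : s ≤ ε / c d := min_le_right _ _
        calc s * c d ≤ (ε / c d) * c d := by nlinarith
          _ = ε := by field_simp
      linarith
  by_contra hcon
  push_neg at hcon
  have := this (-E/2) (by linarith)
  linarith

/-- Optimality characterization (eq. 37) of the proximal y-subproblem. -/
theorem stmt_4 {n1 n2 m : ℕ}
    (A : Matrix (Fin m) (Fin n1) ℝ) (B : Matrix (Fin m) (Fin n2) ℝ) (b : Fin m → ℝ)
    (g : (Fin n2 → ℝ) → ℝ) (Y : Set (Fin n2 → ℝ))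
    (hg : ConvexOn ℝ Set.univ g) (hY : Convex ℝ Y)
    (β τ r : ℝ) (hβ : 0 < β) (hτ : 0 < τ) (hr : 0 < r)
    (xt : Fin n1 → ℝ) (yk : Fin n2 → ℝ) (l : Fin m → ℝ)
    (D : Matrix (Fin n2) (Fin n2) ℝ)
    (hD : D = (τ * r * β) • (1 : Matrix (Fin n2) (Fin n2) ℝ) - β • (Bᵀ * B))
    (yt : Fin n2 → ℝ) (hytY : yt ∈ Y)
    (hmin : ∀ y ∈ Y,
      g yt - l ⬝ᵥ (B *ᵥ yt) + (β / 2) * ((A *ᵥ xt + B *ᵥ yt - b) ⬝ᵥ (A *ᵥ xt + B *ᵥ yt - b))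
        + (1 / 2) * ((yt - yk) ⬝ᵥ (D *ᵥ (yt - yk))) ≤
      g y - l ⬝ᵥ (B *ᵥ y) + (β / 2) * ((A *ᵥ xt + B *ᵥ y - b) ⬝ᵥ (A *ᵥ xt + B *ᵥ y - b))
        + (1 / 2) * ((y - yk) ⬝ᵥ (D *ᵥ (y - yk))))
    (lt : Fin m → ℝ) (hlt : lt = l - β • (A *ᵥ xt + B *ᵥ yk - b)) :
    ∀ y ∈ Y, g y - g yt + (y - yt) ⬝ᵥ (-(Bᵀ *ᵥ lt) + (τ * r * β) • (yt - yk)) ≥ 0 := by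
  subst hD hlt
  set q : (Fin n2 → ℝ) → ℝ := fun y =>
    - (l ⬝ᵥ (B *ᵥ y)) + (β / 2) * ((A *ᵥ xt + B *ᵥ y - b) ⬝ᵥ (A *ᵥ xt + B *ᵥ y - b))
      + (1 / 2) * ((y - yk) ⬝ᵥ
        (((τ * r * β) • (1 : Matrix (Fin n2) (Fin n2) ℝ) - β • (Bᵀ * B)) *ᵥ (y - yk))) with hqdef
  set φc : (Fin n2 → ℝ) → ℝ := fun d =>
    d ⬝ᵥ (-(Bᵀ *ᵥ (l - β • (A *ᵥ xt + B *ᵥ yk - b))) + (τ * r * β) • (yt - yk)) with hφdef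
  set c : (Fin n2 → ℝ) → ℝ := fun d => (τ * r * β / 2) * (d ⬝ᵥ d) with hcdef
  have hc : ∀ d, 0 ≤ c d := by
    intro d
    have : 0 ≤ d ⬝ᵥ d := Finset.sum_nonneg fun i _ => mul_self_nonneg (d i)
    have h : 0 < τ * r * β := by positivity
    rw [hcdef]; positivity
  have hq : ∀ d s, q (yt + s • d) = q yt + s * φc d + s^2 * c d := by
    intro d s
    simp only [hqdef, hφdef, hcdef, Matrix.mulVec_add, Matrix.mulVec_smul,
      Matrix.sub_mulVec, Matrix.smul_mulVec, Matrix.one_mulVec,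
      add_dotProduct, dotProduct_add, smul_dotProduct,
      dotProduct_smul, sub_dotProduct, dotProduct_sub,
      neg_dotProduct, dotProduct_neg, smul_eq_mul,
      ← Matrix.mulVec_mulVec]
    have hBt : ∀ (v : Fin n2 → ℝ) (w : Fin m → ℝ), v ⬝ᵥ (Bᵀ *ᵥ w) = (B *ᵥ v) ⬝ᵥ w := by
      intro v w
      rw [Matrix.dotProduct_mulVec, Matrix.vecMul_transpose, dotProduct_comm]
    simp only [hBt]
    rw [show yt + s • d - yk = (yt - yk) + s • d by module]
    simp only [Matrix.mulVec_add, Matrix.mulVec_smul, Matrix.mulVec_sub,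
      add_dotProduct, dotProduct_add, smul_dotProduct,
      dotProduct_smul, sub_dotProduct, dotProduct_sub, smul_eq_mul]
    simp only [dotProduct_comm yt d, dotProduct_comm yk d,
      dotProduct_comm (A *ᵥ xt) (B *ᵥ d), dotProduct_comm b (B *ᵥ d),
      dotProduct_comm l (B *ᵥ d), dotProduct_comm (B *ᵥ yk) (B *ᵥ d),
      dotProduct_comm (B *ᵥ yt) (B *ᵥ d)]
    ring
  have hmin' : ∀ y ∈ Y, g yt + q yt ≤ g y + q y := by
    intro y hy
    have := hmin y hy
    simp only [hqdef]
    linarith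
  intro y hy
  have := key_vi g Y hg hY yt hytY q φc c hc hq hmin' y hy
  simp only [hφdef] at this
  linarith
end

section
/- Let f : ℝ^{n1} → ℝ and g : ℝ^{n2} → ℝ be convex, X ⊆ ℝ^{n1} and Y ⊆ ℝ^{n2} convex sets, β > 0, τ > 0, r > 0, and fix y^k ∈ ℝ^{n2}, λ^k ∈ ℝ^m. Suppose x̃ ∈ X, ỹ ∈ Y, and λ̃ ∈ ℝ^m satisfy: (i) for all x ∈ X, f(x) − f(x̃) + (x − x̃)ᵀ(−Aᵀλ^k + βAᵀ(Ax̃ + By^k − b)) ≥ 0; (ii) for all y ∈ Y, g(y) − g(ỹ) + (y − ỹ)ᵀ(−Bᵀλ^k + βBᵀ(Ax̃ + Bỹ − b) + (τrβ I_{n2} − βBᵀB)(ỹ − y^k)) ≥ 0; (iii) λ̃ = λ^k − β(Ax̃ + By^k − b). Let Q be the (n2+m) × (n2+m) block matrix Q = [[τrβ I_{n2}, 0], [−B, (1/β) I_m]]. Then for every w = (x, y, λ) ∈ X × Y × ℝ^m, writing w̃ = (x̃, ỹ, λ̃), v = (y, λ), ṽ = (ỹ, λ̃), v^k = (y^k,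 λ^k), θ(x, y) = f(x) + g(y), and F(x, y, λ) = (−Aᵀλ, −Bᵀλ, Ax + By − b), we have θ(x, y) − θ(x̃, ỹ) + (w − w̃)ᵀ F(w̃) ≥ (v − ṽ)ᵀ Q (v^k − ṽ). -/
open Matrix

/-- Lemma 3.1: variational-inequality characterization of one iteration. -/
theorem stmt_5 {n1 n2 m : ℕ}
    (A : Matrix (Fin m) (Fin n1) ℝ) (B : Matrix (Fin m) (Fin n2) ℝ) (b : Fin m → ℝ)
    (f : (Fin n1 → ℝ) → ℝ) (g : (Fin n2 → ℝ) → ℝ)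
    (X : Set (Fin n1 → ℝ)) (Y : Set (Fin n2 → ℝ))
    (hf : ConvexOn ℝ Set.univ f) (hg : ConvexOn ℝ Set.univ g)
    (hX : Convex ℝ X) (hY : Convex ℝ Y)
    (β τ r : ℝ) (hβ : 0 < β) (hτ : 0 < τ) (hr : 0 < r)
    (yk : Fin n2 → ℝ) (lk : Fin m → ℝ)
    (xt : Fin n1 → ℝ) (yt : Fin n2 → ℝ) (lt : Fin m → ℝ)
    (hxtX : xt ∈ X) (hytY : yt ∈ Y)
    (hi : ∀ x ∈ X,
      f x - f xt + (x - xt) ⬝ᵥ (-(Aᵀ *ᵥ lk) + β • (Aᵀ *ᵥ (A *ᵥ xt + B *ᵥ yk - b))) ≥ 0)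
    (hii : ∀ y ∈ Y,
      g y - g yt + (y - yt) ⬝ᵥ (-(Bᵀ *ᵥ lk) + β • (Bᵀ *ᵥ (A *ᵥ xt + B *ᵥ yt - b))
        + ((τ * r * β) • (1 : Matrix (Fin n2) (Fin n2) ℝ) - β • (Bᵀ * B)) *ᵥ (yt - yk)) ≥ 0)
    (hiii : lt = lk - β • (A *ᵥ xt + B *ᵥ yk - b))
    (Q : Matrix (Fin n2 ⊕ Fin m) (Fin n2 ⊕ Fin m) ℝ)
    (hQ : Q = Matrix.fromBlocks ((τ * r * β) • (1 : Matrix (Fin n2) (Fin n2) ℝ)) 0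
      (-B) ((1 / β) • (1 : Matrix (Fin m) (Fin m) ℝ))) :
    ∀ x ∈ X, ∀ y ∈ Y, ∀ l : Fin m → ℝ,
      f x + g y - (f xt + g yt)
        + ((x - xt) ⬝ᵥ (-(Aᵀ *ᵥ lt)) + (y - yt) ⬝ᵥ (-(Bᵀ *ᵥ lt))
          + (l - lt) ⬝ᵥ (A *ᵥ xt + B *ᵥ yt - b))
      ≥ (Sum.elim (y - yt) (l - lt)) ⬝ᵥ (Q *ᵥ (Sum.elim (yk - yt) (lk - lt))) := by
  intro x hx y hy l
  have hβ' : β ≠ 0 := ne_of_gt hβ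
  -- rewrite (i)
  have e1 : -(Aᵀ *ᵥ lk) + β • (Aᵀ *ᵥ (A *ᵥ xt + B *ᵥ yk - b)) = -(Aᵀ *ᵥ lt) := by
    rw [hiii]
    simp only [mulVec_sub, mulVec_smul, mulVec_add]
    module
  have h1 : f x - f xt + (x - xt) ⬝ᵥ (-(Aᵀ *ᵥ lt)) ≥ 0 := by
    have := hi x hx; rwa [e1] at this
  -- rewrite (ii)
  have e2 : -(Bᵀ *ᵥ lk) + β • (Bᵀ *ᵥ (A *ᵥ xt + B *ᵥ yt - b))
        + ((τ * r * β) • (1 : Matrix (Fin n2) (Fin n2) ℝ) - β • (Bᵀ * B)) *ᵥ (yt - yk)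
      = -(Bᵀ *ᵥ lt) + (τ * r * β) • (yt - yk) := by
    rw [hiii]
    simp only [mulVec_sub, mulVec_add, mulVec_smul, sub_mulVec, smul_mulVec,
      one_mulVec, ← mulVec_mulVec]
    module
  have h2 : g y - g yt + (y - yt) ⬝ᵥ (-(Bᵀ *ᵥ lt) + (τ * r * β) • (yt - yk)) ≥ 0 := by
    have := hii y hy; rwa [e2] at this
  -- compute RHS
  have hlk : lk - lt = β • (A *ᵥ xt + B *ᵥ yk - b) := by rw [hiii]; module
  have eQ : Q *ᵥ (Sum.elim (yk - yt) (lk - lt))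
      = Sum.elim ((τ * r * β) • (yk - yt)) (A *ᵥ xt + B *ᵥ yt - b) := by
    rw [hQ, fromBlocks_mulVec, hlk]
    simp only [smul_mulVec, one_mulVec, zero_mulVec, add_zero, neg_mulVec, one_div,
      smul_smul, inv_mul_cancel₀ hβ', one_smul]
    funext i
    cases i <;> simp [mulVec_sub, Matrix.sub_mulVec, mul_inv_cancel₀ hβ'] <;> field_simp <;> ring
  rw [eQ, sumElim_dotProduct_sumElim]
  have e4 : (y - yt) ⬝ᵥ ((τ * r * β) • (yk - yt)) = -((y - yt) ⬝ᵥ ((τ * r * β) • (yt - yk))) := by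
    rw [← dotProduct_neg]; congr 1; module
  rw [e4]
  have h2' : g y - g yt + ((y - yt) ⬝ᵥ (-(Bᵀ *ᵥ lt)) + (y - yt) ⬝ᵥ ((τ * r * β) • (yt - yk))) ≥ 0 := by
    rwa [← dotProduct_add]
  linarith
end

section
/- Let H, M, Q be n × n real matrices with H symmetric and Q = HM, and let G = Qᵀ + Q − MᵀHM. Fix v^k, ṽ ∈ ℝ^n and set v^{k+1} = v^k − M(v^k − ṽ). Then for every v ∈ ℝ^n: (v − ṽ)ᵀ H (v^k − v^{k+1}) = (1/2)(‖v − v^{k+1}‖²_H − ‖v − v^k‖²_H) + (1/2)‖v^k − ṽ‖²_G, where ‖x‖²_H := xᵀHx and ‖x‖²_G := xᵀGx. -/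
open Matrix

lemma symm_dot {n : ℕ} (H : Matrix (Fin n) (Fin n) ℝ) (hH : H.IsSymm)
    (x y : Fin n → ℝ) : x ⬝ᵥ (H *ᵥ y) = y ⬝ᵥ (H *ᵥ x) := by
  rw [dotProduct_mulVec, ← mulVec_transpose, hH.eq, dotProduct_comm]

lemma dot_transpose_mulVec {n : ℕ} (M : Matrix (Fin n) (Fin n) ℝ)
    (x y : Fin n → ℝ) : x ⬝ᵥ (Mᵀ *ᵥ y) = (M *ᵥ x) ⬝ᵥ y := by
  rw [mulVec_transpose, dotProduct_comm, ← dotProduct_mulVec, dotProduct_comm]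

/-- Lemma 3.3. -/
theorem stmt_8 {n : ℕ} (H M Q : Matrix (Fin n) (Fin n) ℝ)
    (hH : H.IsSymm) (hQ : Q = H * M)
    (G : Matrix (Fin n) (Fin n) ℝ) (hG : G = Qᵀ + Q - Mᵀ * H * M)
    (vk vt vk1 : Fin n → ℝ) (hvk1 : vk1 = vk - M *ᵥ (vk - vt)) :
    ∀ v : Fin n → ℝ,
      (v - vt) ⬝ᵥ (H *ᵥ (vk - vk1)) =
        (1 / 2) * ((v - vk1) ⬝ᵥ (H *ᵥ (v - vk1)) - (v - vk) ⬝ᵥ (H *ᵥ (v - vk)))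
        + (1 / 2) * ((vk - vt) ⬝ᵥ (G *ᵥ (vk - vt))) := by
  subst hQ hG hvk1
  intro v
  set d := vk - vt with hd
  set w := v - vk with hw
  have h1 : vk - (vk - M *ᵥ d) = M *ᵥ d := by abel
  have h2 : v - (vk - M *ᵥ d) = w + M *ᵥ d := by rw [hw]; abel
  have h3 : v - vt = w + d := by rw [hw, hd]; abel
  rw [h1, h2, h3]
  have e1 : (w + d) ⬝ᵥ (H *ᵥ (M *ᵥ d))
      = w ⬝ᵥ (H *ᵥ (M *ᵥ d)) + d ⬝ᵥ (H *ᵥ (M *ᵥ d)) := add_dotProduct ..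
  have e2 : (w + M *ᵥ d) ⬝ᵥ (H *ᵥ (w + M *ᵥ d))
      = w ⬝ᵥ (H *ᵥ w) + w ⬝ᵥ (H *ᵥ (M *ᵥ d)) + (M *ᵥ d) ⬝ᵥ (H *ᵥ w)
        + (M *ᵥ d) ⬝ᵥ (H *ᵥ (M *ᵥ d)) := by
    rw [mulVec_add, add_dotProduct, dotProduct_add, dotProduct_add]; ring
  have e3 : d ⬝ᵥ (((H * M)ᵀ + H * M - Mᵀ * H * M) *ᵥ d)
      = d ⬝ᵥ ((H * M)ᵀ *ᵥ d) + d ⬝ᵥ ((H * M) *ᵥ d) - d ⬝ᵥ ((Mᵀ * H * M) *ᵥ d) := by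
    rw [sub_mulVec, add_mulVec, dotProduct_sub, dotProduct_add]
  have s1 : (M *ᵥ d) ⬝ᵥ (H *ᵥ w) = w ⬝ᵥ (H *ᵥ (M *ᵥ d)) := symm_dot H hH ..
  have s2 : d ⬝ᵥ ((H * M)ᵀ *ᵥ d) = d ⬝ᵥ (H *ᵥ (M *ᵥ d)) := by
    rw [dot_transpose_mulVec, dotProduct_comm, ← mulVec_mulVec]
  have s3 : d ⬝ᵥ ((H * M) *ᵥ d) = d ⬝ᵥ (H *ᵥ (M *ᵥ d)) := by
    rw [← mulVec_mulVec]
  have s4 : d ⬝ᵥ ((Mᵀ * H * M) *ᵥ d) = (M *ᵥ d) ⬝ᵥ (H *ᵥ (M *ᵥ d)) := by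
    rw [← mulVec_mulVec, ← mulVec_mulVec, dot_transpose_mulVec]
  rw [e1, e2, e3, s1, s2, s3, s4]
  ring
end

section
/- Let β > 0, σ > 0, τ > 0, r > 0, and B ∈ ℝ^{m×n2}. Define the (n2+m) × (n2+m) block matrices Q = [[τrβ I_{n2}, 0], [−B, (1/β) I_m]], M = [[σ I_{n2}, 0], [−σβ B, σ I_m]], and H = (1/σ)[[τrβ I_{n2}, 0], [0, (1/β) I_m]]. Then Q = HM, H is symmetric positive semidefinite, and G := Qᵀ + Q − MᵀHM equals the block matrix [[(2 − σ)τrβ I_{n2} − σβ BᵀB, (σ − 1)Bᵀ], [(σ − 1)B, ((2 − σ)/β) I_m]]. -/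
open Matrix

lemma fb_sub {l m n o α : Type*} [SubtractionMonoid α]
    (A : Matrix l n α) (B : Matrix l o α) (C : Matrix m n α) (D : Matrix m o α)
    (A' : Matrix l n α) (B' : Matrix l o α) (C' : Matrix m n α) (D' : Matrix m o α) :
    Matrix.fromBlocks A B C D - Matrix.fromBlocks A' B' C' D' =
      Matrix.fromBlocks (A - A') (B - B') (C - C') (D - D') := by
  ext (i|i) (j|j) <;> simp [Matrix.fromBlocks]

/-- Lemma 2.1 together with the computation of the matrix G (eq. 44). -/
theorem stmt_9 {n2 m : ℕ} (β σ τ r : ℝ) (hβ : 0 < β) (hσ : 0 < σ) (hτ : 0 < τ) (hr : 0 < r)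
    (B : Matrix (Fin m) (Fin n2) ℝ)
    (Q M H : Matrix (Fin n2 ⊕ Fin m) (Fin n2 ⊕ Fin m) ℝ)
    (hQ : Q = Matrix.fromBlocks ((τ * r * β) • (1 : Matrix (Fin n2) (Fin n2) ℝ)) 0
      (-B) ((1 / β) • (1 : Matrix (Fin m) (Fin m) ℝ)))
    (hM : M = Matrix.fromBlocks (σ • (1 : Matrix (Fin n2) (Fin n2) ℝ)) 0
      (-((σ * β) • B)) (σ • (1 : Matrix (Fin m) (Fin m) ℝ)))
    (hH : H = (1 / σ) • Matrix.fromBlocks ((τ * r * β) • (1 : Matrix (Fin n2) (Fin n2) ℝ)) 0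
      0 ((1 / β) • (1 : Matrix (Fin m) (Fin m) ℝ))) :
    Q = H * M ∧ H.IsSymm ∧ H.PosSemidef ∧
      Qᵀ + Q - Mᵀ * H * M =
        Matrix.fromBlocks
          (((2 - σ) * τ * r * β) • (1 : Matrix (Fin n2) (Fin n2) ℝ) - (σ * β) • (Bᵀ * B))
          ((σ - 1) • Bᵀ) ((σ - 1) • B)
          (((2 - σ) / β) • (1 : Matrix (Fin m) (Fin m) ℝ)) := by
  subst hQ hM hH
  have hσ' : σ ≠ 0 := ne_of_gt hσ
  have hβ' : β ≠ 0 := ne_of_gt hβ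
  refine ⟨?_, ?_, ?_, ?_⟩
  · simp only [Matrix.smul_mul, Matrix.fromBlocks_multiply, Matrix.mul_smul, Matrix.one_mul,
      Matrix.mul_one, Matrix.zero_mul, Matrix.mul_zero, add_zero, zero_add, smul_smul,
      Matrix.fromBlocks_smul, smul_zero, smul_neg, Matrix.mul_neg, neg_zero]
    rw [show σ * (1 / σ * (τ * r * β)) = τ * r * β by field_simp,
        show σ * β * (1 / σ * (1 / β)) = 1 by field_simp,
        show σ * (1 / σ * (1 / β)) = 1 / β by field_simp, one_smul]
  · unfold Matrix.IsSymm
    simp [Matrix.fromBlocks_transpose, Matrix.transpose_smul]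
  · rw [Matrix.smul_one_eq_diagonal, Matrix.smul_one_eq_diagonal,
      Matrix.fromBlocks_diagonal, ← Matrix.diagonal_smul, Matrix.posSemidef_diagonal_iff]
    rintro (i | i) <;> simp [Sum.elim] <;> positivity
  · simp only [Matrix.fromBlocks_transpose, Matrix.transpose_smul, Matrix.transpose_one,
      Matrix.transpose_zero, Matrix.transpose_neg, Matrix.smul_mul, Matrix.mul_smul,
      Matrix.fromBlocks_multiply, Matrix.fromBlocks_add, Matrix.fromBlocks_smul,
      Matrix.one_mul, Matrix.mul_one, Matrix.zero_mul, Matrix.mul_zero, add_zero, zero_add,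
      smul_zero, smul_neg, neg_zero, Matrix.mul_neg, Matrix.neg_mul, smul_smul, neg_neg,
      sub_zero]
    rw [show σ * (1 / σ * (τ * r * β) * σ) = τ * r * β + τ * r * β - (2 - σ) * τ * r * β by field_simp; ring,
        show σ * β * (1 / σ * (1 / β) * (σ * β)) = σ * β by field_simp,
        show σ * (1 / σ * (1 / β) * (σ * β)) = σ by field_simp,
        show σ * β * (1 / σ * (1 / β) * σ) = σ by field_simp,
        show σ * (1 / σ * (1 / β) * σ) = σ / β by field_simp,
        fb_sub]
    refine Matrix.fromBlocks_inj.mpr ⟨?_, ?_, ?_, ?_⟩ <;> module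
end

section
/- Let θ : ℝ^{n1} × ℝ^{n2} → ℝ, let Ω = X × Y × ℝ^m with X ⊆ ℝ^{n1}, Y ⊆ ℝ^{n2}, let F(x, y, λ) = (−Aᵀλ, −Bᵀλ, Ax + By − b), and let Q, M, H be (n2+m) × (n2+m) matrices with H symmetric and Q = HM; set G = Qᵀ + Q − MᵀHM. Suppose w̃ = (x̃, ỹ, λ̃) ∈ Ω, v^k ∈ ℝ^{n2+m}, and v^{k+1} = v^k − M(v^k − ṽ) where ṽ = (ỹ, λ̃). Assume: (i) for all w = (x, y, λ) ∈ Ω, θ(x, y) − θ(x̃, ỹ) + (w − w̃)ᵀF(w̃) ≥ (v − ṽ)ᵀ Q (v^k − ṽ), where v = (y, λ); (ii) w* = (x*, y*, λ*) ∈ Ω satisfies θ(x, y) − θ(x*, y*) + (w − w*)ᵀF(w*) ≥ 0 for all w ∈ Ω. Then, writing v* = (y*, λ*): ‖v^{k+1} − v*‖²_H ≤ ‖v^k − v*‖²_H − ‖v^k − ṽ‖²_G, where ‖x‖²_D := xᵀDx. -/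
open Matrix

/-- Inequality (55) in the proof of Theorem 3.1. -/
theorem stmt_12 {n1 n2 m : ℕ}
    (A : Matrix (Fin m) (Fin n1) ℝ) (B : Matrix (Fin m) (Fin n2) ℝ) (b : Fin m → ℝ)
    (θ : (Fin n1 → ℝ) → (Fin n2 → ℝ) → ℝ)
    (X : Set (Fin n1 → ℝ)) (Y : Set (Fin n2 → ℝ))
    (Q M H : Matrix (Fin n2 ⊕ Fin m) (Fin n2 ⊕ Fin m) ℝ)
    (hH : H.IsSymm) (hQ : Q = H * M)
    (G : Matrix (Fin n2 ⊕ Fin m) (Fin n2 ⊕ Fin m) ℝ) (hG : G = Qᵀ + Q - Mᵀ * H * M)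
    (xt : Fin n1 → ℝ) (yt : Fin n2 → ℝ) (lt : Fin m → ℝ)
    (hxt : xt ∈ X) (hyt : yt ∈ Y)
    (vk : Fin n2 ⊕ Fin m → ℝ) (vk1 : Fin n2 ⊕ Fin m → ℝ)
    (hvk1 : vk1 = vk - M *ᵥ (vk - Sum.elim yt lt))
    (hi : ∀ x ∈ X, ∀ y ∈ Y, ∀ l : Fin m → ℝ,
      θ x y - θ xt yt
        + ((x - xt) ⬝ᵥ (-(Aᵀ *ᵥ lt)) + (y - yt) ⬝ᵥ (-(Bᵀ *ᵥ lt))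
          + (l - lt) ⬝ᵥ (A *ᵥ xt + B *ᵥ yt - b))
      ≥ (Sum.elim (y - yt) (l - lt)) ⬝ᵥ (Q *ᵥ (vk - Sum.elim yt lt)))
    (xs : Fin n1 → ℝ) (ys : Fin n2 → ℝ) (ls : Fin m → ℝ)
    (hxs : xs ∈ X) (hys : ys ∈ Y)
    (hstar : ∀ x ∈ X, ∀ y ∈ Y, ∀ l : Fin m → ℝ,
      θ x y - θ xs ys
        + ((x - xs) ⬝ᵥ (-(Aᵀ *ᵥ ls)) + (y - ys) ⬝ᵥ (-(Bᵀ *ᵥ ls))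
          + (l - ls) ⬝ᵥ (A *ᵥ xs + B *ᵥ ys - b)) ≥ 0) :
    (vk1 - Sum.elim ys ls) ⬝ᵥ (H *ᵥ (vk1 - Sum.elim ys ls)) ≤
      (vk - Sum.elim ys ls) ⬝ᵥ (H *ᵥ (vk - Sum.elim ys ls))
      - (vk - Sum.elim yt lt) ⬝ᵥ (G *ᵥ (vk - Sum.elim yt lt)) := by
  set vt := Sum.elim yt lt with hvt
  set vs := Sum.elim ys ls with hvs
  set d := vk - vt with hd
  set e := vk - vs with he
  -- transpose-dot lemmas
  have hAt : ∀ (u : Fin n1 → ℝ) (l : Fin m → ℝ), u ⬝ᵥ (Aᵀ *ᵥ l) = l ⬝ᵥ (A *ᵥ u) := by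
    intro u l
    rw [Matrix.dotProduct_mulVec, Matrix.vecMul_transpose, dotProduct_comm]
  have hBt : ∀ (u : Fin n2 → ℝ) (l : Fin m → ℝ), u ⬝ᵥ (Bᵀ *ᵥ l) = l ⬝ᵥ (B *ᵥ u) := by
    intro u l
    rw [Matrix.dotProduct_mulVec, Matrix.vecMul_transpose, dotProduct_comm]
  have hT : ∀ (C : Matrix (Fin n2 ⊕ Fin m) (Fin n2 ⊕ Fin m) ℝ)
      (u w : Fin n2 ⊕ Fin m → ℝ), u ⬝ᵥ (Cᵀ *ᵥ w) = w ⬝ᵥ (C *ᵥ u) := by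
    intro C u w
    rw [Matrix.dotProduct_mulVec, Matrix.vecMul_transpose, dotProduct_comm]
  have hHdot : ∀ (u w : Fin n2 ⊕ Fin m → ℝ), u ⬝ᵥ (H *ᵥ w) = w ⬝ᵥ (H *ᵥ u) := by
    intro u w
    conv_lhs => rw [← hH.eq]
    exact hT H u w
  have h_elim : Sum.elim (ys - yt) (ls - lt) = vs - vt := by
    funext i; cases i <;> simp [hvs, hvt]
  have h1 := hi xs hxs ys hys ls
  have h2 := hstar xt hxt yt hyt lt
  rw [h_elim] at h1
  have hkey : (vs - vt) ⬝ᵥ (Q *ᵥ d) ≤ 0 := by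
    have hs : ((xs - xt) ⬝ᵥ (-(Aᵀ *ᵥ lt)) + (ys - yt) ⬝ᵥ (-(Bᵀ *ᵥ lt))
          + (ls - lt) ⬝ᵥ (A *ᵥ xt + B *ᵥ yt - b))
        + ((xt - xs) ⬝ᵥ (-(Aᵀ *ᵥ ls)) + (yt - ys) ⬝ᵥ (-(Bᵀ *ᵥ ls))
          + (lt - ls) ⬝ᵥ (A *ᵥ xs + B *ᵥ ys - b)) = 0 := by
      simp only [dotProduct_neg, sub_dotProduct, dotProduct_sub, dotProduct_add,
        Matrix.mulVec_sub, Matrix.mulVec_add, Matrix.mulVec_neg, hAt, hBt]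
      ring
    linarith
  -- generic quadratic expansions
  have exp1 : ∀ u w : Fin n2 ⊕ Fin m → ℝ, (u - M *ᵥ w) ⬝ᵥ (H *ᵥ (u - M *ᵥ w))
      = u ⬝ᵥ (H *ᵥ u) - 2 * (u ⬝ᵥ ((H * M) *ᵥ w)) + (M *ᵥ w) ⬝ᵥ (H *ᵥ (M *ᵥ w)) := by
    intro u w
    rw [Matrix.mulVec_sub]
    simp only [dotProduct_sub, sub_dotProduct]
    have h5 := hHdot (M *ᵥ w) u
    have h6 : u ⬝ᵥ (H *ᵥ (M *ᵥ w)) = u ⬝ᵥ ((H * M) *ᵥ w) := by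
      rw [Matrix.mulVec_mulVec]
    linarith
  have exp2 : ∀ w : Fin n2 ⊕ Fin m → ℝ, w ⬝ᵥ (((H * M)ᵀ + H * M - Mᵀ * H * M) *ᵥ w)
      = 2 * (w ⬝ᵥ ((H * M) *ᵥ w)) - (M *ᵥ w) ⬝ᵥ (H *ᵥ (M *ᵥ w)) := by
    intro w
    rw [Matrix.sub_mulVec, Matrix.add_mulVec]
    simp only [dotProduct_sub, dotProduct_add]
    have h3 : w ⬝ᵥ ((H * M)ᵀ *ᵥ w) = w ⬝ᵥ ((H * M) *ᵥ w) := by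
      rw [hT]
    have h4 : w ⬝ᵥ ((Mᵀ * H * M) *ᵥ w) = (M *ᵥ w) ⬝ᵥ (H *ᵥ (M *ᵥ w)) := by
      have h7 : Mᵀ * H * M = Mᵀ * (H * M) := by rw [Matrix.mul_assoc]
      rw [h7, ← Matrix.mulVec_mulVec, hT, dotProduct_comm, Matrix.mulVec_mulVec]
    linarith
  have hMd : vk1 - vs = e - M *ᵥ d := by
    rw [hvk1, he, hd]; abel
  rw [hMd, hG, hQ, exp1 e d, exp2 d]
  have hsplit : (vs - vt) ⬝ᵥ (Q *ᵥ d) = d ⬝ᵥ (Q *ᵥ d) - e ⬝ᵥ (Q *ᵥ d) := by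
    have h8 : vs - vt = d - e := by rw [hd, he]; abel
    rw [h8, sub_dotProduct]
  rw [hQ] at hsplit hkey
  linarith
end

section
/- Let f : ℝ^{n1} → ℝ and g : ℝ^{n2} → ℝ be convex, X ⊆ ℝ^{n1} and Y ⊆ ℝ^{n2} convex sets, β > 0, r > 0, σ ∈ (0, 2), ε ∈ (0, 2 − σ), and let τ_{k−1}, τ_k > 0 and ξ_k ≥ 0 satisfy τ_k ≤ (1 + ξ_k) τ_{k−1}. Fix y^k ∈ Y, λ^k ∈ ℝ^m, and suppose x̃ ∈ X, ỹ ∈ Y satisfy the optimality conditions: (i) for all x ∈ X, f(x) − f(x̃) + (x − x̃)ᵀ(−Aᵀλ^k + βAᵀ(Ax̃ + By^k − b)) ≥ 0; (ii) for all y ∈ Y, g(y) − g(ỹ) + (y − ỹ)ᵀ(−Bᵀλ^k + βBᵀ(Ax̃ + Bỹ − b) + (τ_k rβ I_{n2} − βBᵀB)(ỹ − y^k)) ≥ 0. Define λ̂ = λ^k − β(Ax̃ + Bỹ − b), y^{k+1} = y^k − σ(y^k − ỹ), λ^{k+1} = λ^k − σ(λ^k − λ̂). Let w* = (x*, y*,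 λ*) ∈ X × Y × ℝ^m satisfy f(x) + g(y) − f(x*) − g(y*) + (w − w*)ᵀF(w*) ≥ 0 for all w = (x, y, λ) ∈ X × Y × ℝ^m, where F(x, y, λ) = (−Aᵀλ, −Bᵀλ, Ax + By − b). Define H_k = (1/σ)[[τ_{k−1} rβ I_{n2}, 0], [0, (1/β) I_m]], H_{k+1} = (1/σ)[[τ_k rβ I_{n2}, 0], [0, (1/β) I_m]], and T_{k+1} = (2 − σ)τ_k r I_{n2} − (1/ε) BᵀB. Then, writing v^k = (y^k, λ^k), v^{k+1} = (y^{k+1}, λ^{k+1}), v* = (y*, λ*): ‖v^{k+1} − v*‖²_{H_{k+1}} ≤ (1 + ξ_k)‖v^k − v*‖²_{H_k} − (1/σ²)[ β ‖y^k − y^{k+1}‖²_{T_{k+1}} + ((2 − σ − ε)/β) ‖λ^k − λ^{k+1}‖² ]. -/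
open Matrix

private lemma dot_tr {k l : ℕ} (M : Matrix (Fin k) (Fin l) ℝ) (x : Fin l → ℝ) (y : Fin k → ℝ) :
    x ⬝ᵥ (Mᵀ *ᵥ y) = (M *ᵥ x) ⬝ᵥ y := by
  rw [mulVec_transpose, dotProduct_comm, ← dotProduct_mulVec, dotProduct_comm]

private lemma dotSelf_nonneg {k : ℕ} (v : Fin k → ℝ) : 0 ≤ v ⬝ᵥ v :=
  Fintype.sum_nonneg fun i => mul_self_nonneg _

private lemma elim_dot {k l : ℕ} (x y : Fin k → ℝ) (u v : Fin l → ℝ) :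
    Sum.elim x u ⬝ᵥ Sum.elim y v = x ⬝ᵥ y + u ⬝ᵥ v := by
  simp [dotProduct, Fintype.sum_sum_type]

private lemma aux_ineq (σ β ε r τk τkm ξk aa ad dd cc cp pp pBd bb : ℝ)
    (hσ0 : 0 < σ) (hβ : 0 < β) (hε0 : 0 < ε) (hr : 0 < r) (hξk : 0 ≤ ξk)
    (hττ : τk ≤ (1 + ξk) * τkm)
    (haa : 0 ≤ aa) (hcc : 0 ≤ cc)
    (hkey : 0 ≤ cp - β*pp - β*pBd - τk*r*β*dd + τk*r*β*ad)
    (hssq : 0 ≤ ε^2*pp + 2*ε*pBd + bb) :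
    (1/σ)*(τk*r*β*(aa - 2*σ*ad + σ^2*dd) + (1/β)*(cc - 2*σ*β*cp + σ^2*β^2*pp))
      ≤ (1+ξk)*((1/σ)*(τkm*r*β*aa + (1/β)*cc))
        - (1/σ^2)*(β*(σ^2*((2-σ)*τk*r*dd - (1/ε)*bb)) + ((2-σ-ε)/β)*(σ^2*β^2*pp)) := by
  rw [← sub_nonneg]
  have hid : (1+ξk)*((1/σ)*(τkm*r*β*aa + (1/β)*cc))
        - (1/σ^2)*(β*(σ^2*((2-σ)*τk*r*dd - (1/ε)*bb)) + ((2-σ-ε)/β)*(σ^2*β^2*pp))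
      - (1/σ)*(τk*r*β*(aa - 2*σ*ad + σ^2*dd) + (1/β)*(cc - 2*σ*β*cp + σ^2*β^2*pp))
      = (2*σ*β*ε*(cp - β*pp - β*pBd - τk*r*β*dd + τk*r*β*ad)
          + σ*β^2*(ε^2*pp + 2*ε*pBd + bb)
          + r*β^2*ε*((1+ξk)*τkm - τk)*aa + ξk*ε*cc) / (σ*β*ε) := by
    field_simp
    ring
  rw [hid]
  apply div_nonneg _ (by positivity)
  have h1 : 0 ≤ 2*σ*β*ε*(cp - β*pp - β*pBd - τk*r*β*dd + τk*r*β*ad) :=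
    mul_nonneg (by positivity) hkey
  have h2 : 0 ≤ σ*β^2*(ε^2*pp + 2*ε*pBd + bb) := mul_nonneg (by positivity) hssq
  have h3 : 0 ≤ r*β^2*ε*((1+ξk)*τkm - τk)*aa :=
    mul_nonneg (mul_nonneg (by positivity) (by linarith)) haa
  have h4 : 0 ≤ ξk*ε*cc := mul_nonneg (mul_nonneg hξk hε0.le) hcc
  linarith

/-- Theorem 3.1: the key contraction inequality for the adaptive linearized ADMM
with a relaxation step. -/
theorem stmt_13 {n1 n2 m : ℕ}
    (A : Matrix (Fin m) (Fin n1) ℝ) (B : Matrix (Fin m) (Fin n2) ℝ) (b : Fin m → ℝ)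
    (f : (Fin n1 → ℝ) → ℝ) (g : (Fin n2 → ℝ) → ℝ)
    (X : Set (Fin n1 → ℝ)) (Y : Set (Fin n2 → ℝ))
    (hf : ConvexOn ℝ Set.univ f) (hg : ConvexOn ℝ Set.univ g)
    (hX : Convex ℝ X) (hY : Convex ℝ Y)
    (β r σ ε : ℝ) (hβ : 0 < β) (hr : 0 < r)
    (hσ : σ ∈ Set.Ioo (0 : ℝ) 2) (hε : ε ∈ Set.Ioo (0 : ℝ) (2 - σ))
    (τkm τk ξk : ℝ) (hτkm : 0 < τkm) (hτk : 0 < τk) (hξk : 0 ≤ ξk)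
    (hττ : τk ≤ (1 + ξk) * τkm)
    (yk : Fin n2 → ℝ) (hykY : yk ∈ Y) (lk : Fin m → ℝ)
    (xt : Fin n1 → ℝ) (yt : Fin n2 → ℝ) (hxtX : xt ∈ X) (hytY : yt ∈ Y)
    (hi : ∀ x ∈ X,
      f x - f xt + (x - xt) ⬝ᵥ (-(Aᵀ *ᵥ lk) + β • (Aᵀ *ᵥ (A *ᵥ xt + B *ᵥ yk - b))) ≥ 0)
    (hii : ∀ y ∈ Y,
      g y - g yt + (y - yt) ⬝ᵥ (-(Bᵀ *ᵥ lk) + β • (Bᵀ *ᵥ (A *ᵥ xt + B *ᵥ yt - b))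
        + ((τk * r * β) • (1 : Matrix (Fin n2) (Fin n2) ℝ) - β • (Bᵀ * B)) *ᵥ (yt - yk)) ≥ 0)
    (lh : Fin m → ℝ) (hlh : lh = lk - β • (A *ᵥ xt + B *ᵥ yt - b))
    (yk1 : Fin n2 → ℝ) (hyk1 : yk1 = yk - σ • (yk - yt))
    (lk1 : Fin m → ℝ) (hlk1 : lk1 = lk - σ • (lk - lh))
    (xs : Fin n1 → ℝ) (ys : Fin n2 → ℝ) (ls : Fin m → ℝ)
    (hxs : xs ∈ X) (hys : ys ∈ Y)
    (hstar : ∀ x ∈ X, ∀ y ∈ Y, ∀ l : Fin m → ℝ,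
      f x + g y - (f xs + g ys)
        + ((x - xs) ⬝ᵥ (-(Aᵀ *ᵥ ls)) + (y - ys) ⬝ᵥ (-(Bᵀ *ᵥ ls))
          + (l - ls) ⬝ᵥ (A *ᵥ xs + B *ᵥ ys - b)) ≥ 0)
    (Hk Hk1 : Matrix (Fin n2 ⊕ Fin m) (Fin n2 ⊕ Fin m) ℝ)
    (hHk : Hk = (1 / σ) • Matrix.fromBlocks
      ((τkm * r * β) • (1 : Matrix (Fin n2) (Fin n2) ℝ)) 0
      0 ((1 / β) • (1 : Matrix (Fin m) (Fin m) ℝ)))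
    (hHk1 : Hk1 = (1 / σ) • Matrix.fromBlocks
      ((τk * r * β) • (1 : Matrix (Fin n2) (Fin n2) ℝ)) 0
      0 ((1 / β) • (1 : Matrix (Fin m) (Fin m) ℝ)))
    (T : Matrix (Fin n2) (Fin n2) ℝ)
    (hT : T = ((2 - σ) * τk * r) • (1 : Matrix (Fin n2) (Fin n2) ℝ) - (1 / ε) • (Bᵀ * B)) :
    (Sum.elim (yk1 - ys) (lk1 - ls)) ⬝ᵥ (Hk1 *ᵥ (Sum.elim (yk1 - ys) (lk1 - ls))) ≤
      (1 + ξk) * ((Sum.elim (yk - ys) (lk - ls)) ⬝ᵥ (Hk *ᵥ (Sum.elim (yk - ys) (lk - ls))))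
      - (1 / σ ^ 2) * (β * ((yk - yk1) ⬝ᵥ (T *ᵥ (yk - yk1)))
        + ((2 - σ - ε) / β) * ((lk - lk1) ⬝ᵥ (lk - lk1))) := by
  obtain ⟨hσ0, hσ2⟩ := hσ
  obtain ⟨hε0, hε2⟩ := hε
  subst hlh hyk1 hlk1 hHk hHk1 hT
  set p : Fin m → ℝ := A *ᵥ xt + B *ᵥ yt - b with hp
  -- the saddle point is feasible
  have hres : A *ᵥ xs + B *ᵥ ys - b = 0 := by
    have h := hstar xs hxs ys hys (ls - (A *ᵥ xs + B *ᵥ ys - b))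
    simp only [sub_self, zero_dotProduct, sub_sub_cancel_left, neg_dotProduct, zero_add,
      add_zero, ge_iff_le] at h
    have h0 : (A *ᵥ xs + B *ᵥ ys - b) ⬝ᵥ (A *ᵥ xs + B *ᵥ ys - b) = 0 :=
      le_antisymm (by linarith) (dotSelf_nonneg _)
    exact dotProduct_self_eq_zero.mp h0
  have hAxs : A *ᵥ xs = b - B *ᵥ ys := eq_sub_of_add_eq (sub_eq_zero.mp hres)
  have hAxt : A *ᵥ xt = p + b - B *ᵥ yt := by rw [hp]; abel
  -- the key inequality from the three variational inequalities
  have key0 : 0 ≤ (lk - ls) ⬝ᵥ p - β*(p ⬝ᵥ p) - β*(p ⬝ᵥ (B *ᵥ yk - B *ᵥ yt))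
      - τk*r*β*((yk - yt) ⬝ᵥ (yk - yt)) + τk*r*β*((yk - ys) ⬝ᵥ (yk - yt)) := by
    have h1 := hi xs hxs
    have h2 := hii ys hys
    have h3 := hstar xt hxtX yt hytY (lk - β • p)
    rw [hres] at h3
    simp only [sub_dotProduct, dotProduct_sub, add_dotProduct, dotProduct_add, neg_dotProduct,
      dotProduct_neg, smul_dotProduct, dotProduct_smul, smul_eq_mul, mulVec_sub, mulVec_add,
      mulVec_smul, sub_mulVec, add_mulVec, smul_mulVec, one_mulVec, zero_mulVec,
      dotProduct_zero, zero_dotProduct, ← mulVec_mulVec, dot_tr, hAxs, hAxt,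
      ge_iff_le] at h1 h2 h3 ⊢
    simp only [dotProduct_comm yt yk, dotProduct_comm ys yk, dotProduct_comm ys yt,
      dotProduct_comm ls lk, dotProduct_comm p lk, dotProduct_comm p ls,
      dotProduct_comm b lk, dotProduct_comm b ls, dotProduct_comm b p,
      dotProduct_comm (B *ᵥ yk) lk, dotProduct_comm (B *ᵥ yk) ls, dotProduct_comm (B *ᵥ yk) p,
      dotProduct_comm (B *ᵥ yk) b, dotProduct_comm (B *ᵥ yt) lk, dotProduct_comm (B *ᵥ yt) ls,
      dotProduct_comm (B *ᵥ yt) p, dotProduct_comm (B *ᵥ yt) b,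
      dotProduct_comm (B *ᵥ yt) (B *ᵥ yk), dotProduct_comm (B *ᵥ ys) lk,
      dotProduct_comm (B *ᵥ ys) ls, dotProduct_comm (B *ᵥ ys) p, dotProduct_comm (B *ᵥ ys) b,
      dotProduct_comm (B *ᵥ ys) (B *ᵥ yk), dotProduct_comm (B *ᵥ ys) (B *ᵥ yt)]
      at h1 h2 h3 ⊢
    linarith
  -- the square term
  have hssq : 0 ≤ ε^2*(p ⬝ᵥ p) + 2*ε*(p ⬝ᵥ (B *ᵥ yk - B *ᵥ yt))
      + (B *ᵥ yk - B *ᵥ yt) ⬝ᵥ (B *ᵥ yk - B *ᵥ yt) := by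
    have h := dotSelf_nonneg (ε • p + (B *ᵥ yk - B *ᵥ yt))
    have e : (ε • p + (B *ᵥ yk - B *ᵥ yt)) ⬝ᵥ (ε • p + (B *ᵥ yk - B *ᵥ yt))
        = ε^2*(p ⬝ᵥ p) + 2*ε*(p ⬝ᵥ (B *ᵥ yk - B *ᵥ yt))
          + (B *ᵥ yk - B *ᵥ yt) ⬝ᵥ (B *ᵥ yk - B *ᵥ yt) := by
      simp only [add_dotProduct, dotProduct_add, smul_dotProduct, dotProduct_smul, smul_eq_mul,
        dotProduct_comm (B *ᵥ yk - B *ᵥ yt) p]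
      ring
    linarith [e ▸ h]
  have main := aux_ineq σ β ε r τk τkm ξk
    ((yk - ys) ⬝ᵥ (yk - ys)) ((yk - ys) ⬝ᵥ (yk - yt)) ((yk - yt) ⬝ᵥ (yk - yt))
    ((lk - ls) ⬝ᵥ (lk - ls)) ((lk - ls) ⬝ᵥ p) (p ⬝ᵥ p)
    (p ⬝ᵥ (B *ᵥ yk - B *ᵥ yt)) ((B *ᵥ yk - B *ᵥ yt) ⬝ᵥ (B *ᵥ yk - B *ᵥ yt))
    hσ0 hβ hε0 hr hξk hττ (dotSelf_nonneg _) (dotSelf_nonneg _) key0 hssq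
  refine le_trans (le_of_eq ?_) (le_trans main (le_of_eq ?_)) <;>
  · simp only [sub_dotProduct, dotProduct_sub, add_dotProduct, dotProduct_add, neg_dotProduct,
      dotProduct_neg, smul_dotProduct, dotProduct_smul, smul_eq_mul, mulVec_sub, mulVec_add,
      mulVec_smul, sub_mulVec, add_mulVec, smul_mulVec, one_mulVec, zero_mulVec,
      dotProduct_zero, zero_dotProduct, ← mulVec_mulVec, dot_tr,
      fromBlocks_mulVec, Sum.elim_comp_inl, Sum.elim_comp_inr, elim_dot, add_zero, zero_add]
    simp only [dotProduct_comm yt yk, dotProduct_comm ys yk, dotProduct_comm ys yt,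
      dotProduct_comm ls lk, dotProduct_comm p lk, dotProduct_comm p ls,
      dotProduct_comm b lk, dotProduct_comm b ls, dotProduct_comm b p,
      dotProduct_comm (B *ᵥ yk) lk, dotProduct_comm (B *ᵥ yk) ls, dotProduct_comm (B *ᵥ yk) p,
      dotProduct_comm (B *ᵥ yk) b, dotProduct_comm (B *ᵥ yt) lk, dotProduct_comm (B *ᵥ yt) ls,
      dotProduct_comm (B *ᵥ yt) p, dotProduct_comm (B *ᵥ yt) b,
      dotProduct_comm (B *ᵥ yt) (B *ᵥ yk), dotProduct_comm (B *ᵥ ys) lk,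
      dotProduct_comm (B *ᵥ ys) ls, dotProduct_comm (B *ᵥ ys) p, dotProduct_comm (B *ᵥ ys) b,
      dotProduct_comm (B *ᵥ ys) (B *ᵥ yk), dotProduct_comm (B *ᵥ ys) (B *ᵥ yt)]
    ring
end

section
/- Let (η_k) and (ξ_k) be nonnegative real sequences with ∑_{k=1}^∞ η_k < ∞, and let (τ_k) be a sequence of positive reals such that τ_{k+1} ≥ ((1 + ξ_k)/(1 + η_k)) τ_k for all k ≥ 1 and τ_k ≤ τ_max for all k, for some constant τ_max > 0. Then ∑_{k=1}^∞ ξ_k < ∞. -/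
open Finset

private lemma sum_le_prod_one_add (f : ℕ → ℝ) (hf : ∀ k, 0 ≤ f k) (s : Finset ℕ) :
    1 + ∑ k ∈ s, f k ≤ ∏ k ∈ s, (1 + f k) := by
  induction s using Finset.induction with
  | empty => simp
  | @insert a s h ih =>
    rw [Finset.sum_insert h, Finset.prod_insert h]
    have hs0 : (0:ℝ) ≤ ∑ k ∈ s, f k := Finset.sum_nonneg fun i _ => hf i
    have hfa : (0:ℝ) ≤ 1 + f a := by linarith [hf a]
    nlinarith [mul_le_mul_of_nonneg_left ih hfa, mul_nonneg (hf a) hs0, hf a]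

/-- Summability of the adaptive increase factors (Section 3.2). -/
theorem stmt_15 (η ξ : ℕ → ℝ) (hη : ∀ k, 0 ≤ η k) (hξ : ∀ k, 0 ≤ ξ k)
    (hηs : Summable η)
    (τ : ℕ → ℝ) (hτpos : ∀ k, 0 < τ k)
    (τmax : ℝ) (hτmax : 0 < τmax) (hbdd : ∀ k, τ k ≤ τmax)
    (hrec : ∀ k, 1 ≤ k → ((1 + ξ k) / (1 + η k)) * τ k ≤ τ (k + 1)) :
    Summable ξ := by
  -- key inductive bound on products
  have key : ∀ n, 1 ≤ n →
      (∏ k ∈ Ico 1 n, (1 + ξ k)) * τ 1 ≤ (∏ k ∈ Ico 1 n, (1 + η k)) * τ n := by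
    intro n hn
    induction n with
    | zero => omega
    | succ m ih =>
      rcases Nat.eq_or_lt_of_le hn with h1 | h1
      · simp [← h1]
      · have hm : 1 ≤ m := by omega
        rw [Finset.prod_Ico_succ_top hm, Finset.prod_Ico_succ_top hm]
        have hrm := hrec m hm
        have hηm : (0:ℝ) < 1 + η m := by linarith [hη m]
        have hξm : (0:ℝ) ≤ 1 + ξ m := by linarith [hξ m]
        have h2 : (1 + ξ m) * τ m ≤ (1 + η m) * τ (m + 1) := by
          rw [div_mul_eq_mul_div, div_le_iff₀ hηm] at hrm
          linarith
        have ih' := ih hm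
        have hPη : 0 ≤ ∏ k ∈ Ico 1 m, (1 + η k) :=
          Finset.prod_nonneg fun i _ => by linarith [hη i]
        calc (∏ k ∈ Ico 1 m, (1 + ξ k)) * (1 + ξ m) * τ 1
            = (1 + ξ m) * ((∏ k ∈ Ico 1 m, (1 + ξ k)) * τ 1) := by ring
          _ ≤ (1 + ξ m) * ((∏ k ∈ Ico 1 m, (1 + η k)) * τ m) :=
              mul_le_mul_of_nonneg_left ih' hξm
          _ = (∏ k ∈ Ico 1 m, (1 + η k)) * ((1 + ξ m) * τ m) := by ring
          _ ≤ (∏ k ∈ Ico 1 m, (1 + η k)) * ((1 + η m) * τ (m + 1)) :=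
              mul_le_mul_of_nonneg_left h2 hPη
          _ = (∏ k ∈ Ico 1 m, (1 + η k)) * (1 + η m) * τ (m + 1) := by ring
  -- bound the η-product by exp of the tsum
  have hηprod : ∀ n, (∏ k ∈ Ico 1 n, (1 + η k)) ≤ Real.exp (∑' k, η k) := by
    intro n
    calc (∏ k ∈ Ico 1 n, (1 + η k)) ≤ ∏ k ∈ Ico 1 n, Real.exp (η k) :=
          Finset.prod_le_prod (fun i _ => by linarith [hη i])
            (fun i _ => by linarith [Real.add_one_le_exp (η i)])
      _ = Real.exp (∑ k ∈ Ico 1 n, η k) := by rw [Real.exp_sum]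
      _ ≤ Real.exp (∑' k, η k) := by
          apply Real.exp_le_exp.2
          exact Summable.sum_le_tsum _ (fun i _ => hη i) hηs
  set C : ℝ := Real.exp (∑' k, η k) * τmax / τ 1 with hC
  apply summable_of_sum_range_le (c := ξ 0 + C) hξ
  intro n
  rcases Nat.eq_zero_or_pos n with rfl | hn
  · have hτ1 := hτpos 1
    have hC0 : 0 ≤ C := by rw [hC]; positivity
    simp only [Finset.range_zero, Finset.sum_empty]
    linarith [hξ 0]
  have hsplit : ∑ k ∈ range n, ξ k = ξ 0 + ∑ k ∈ Ico 1 n, ξ k := by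
    rw [Finset.range_eq_Ico, ← Finset.sum_eq_sum_Ico_succ_bot hn]
  rw [hsplit]
  have h1 : ∑ k ∈ Ico 1 n, ξ k ≤ C := by
    have hp := sum_le_prod_one_add ξ hξ (Ico 1 n)
    have hk := key n hn
    have hτ1 := hτpos 1
    have hb : (∏ k ∈ Ico 1 n, (1 + η k)) * τ n ≤ Real.exp (∑' k, η k) * τmax := by
      apply mul_le_mul (hηprod n) (hbdd n) (hτpos n).le (Real.exp_pos _).le
    have : (∏ k ∈ Ico 1 n, (1 + ξ k)) * τ 1 ≤ Real.exp (∑' k, η k) * τmax :=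
      le_trans hk hb
    have hprod : (∏ k ∈ Ico 1 n, (1 + ξ k)) ≤ C := by
      rw [hC, le_div_iff₀ hτ1]
      exact this
    linarith
  linarith
end

section
/- Let X ⊆ ℝ^{n1}, Y ⊆ ℝ^{n2} be closed sets and Ω = X × Y × ℝ^m. Let θ : ℝ^{n1} × ℝ^{n2} → ℝ be continuous, and F(x, y, λ) = (−Aᵀλ, −Bᵀλ, Ax + By − b). Suppose (w̃^j) is a sequence in Ω converging to w^∞ = (x^∞, y^∞, λ^∞), and (r_j) is a sequence of vectors in ℝ^{n2+m} with r_j → 0 and (Q_j) a sequence of (n2+m) × (n2+m) matrices with ‖Q_j‖ ≤ C for a constant C, such that for every j and every w = (x, y, λ) ∈ Ω, writing w̃^j = (x̃^j, ỹ^j, λ̃^j), ũ^j = (x̃^j, ỹ^j), u = (x, y), v = (y, λ), ṽ^j = (ỹ^j, λ̃^j): θ(u) − θ(ũ^j) + (w − w̃^j)ᵀ F(w̃^j) ≥ (v − ṽ^j)ᵀ Q_j r_j. Then w^∞ ∈ Ω and for all w = (x, y, λ) ∈ Ω: θ(u) − θ(u^∞) + (w − w^∞)ᵀ F(w^∞)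 ≥ 0, i.e., w^∞ solves the variational inequality VI(Ω, F, θ). -/
open Matrix


private lemma tendsto_dot' {ι : Type*} [Fintype ι] {f g : ℕ → ι → ℝ} {a c : ι → ℝ}
    (hf : Filter.Tendsto f Filter.atTop (nhds a))
    (hg : Filter.Tendsto g Filter.atTop (nhds c)) :
    Filter.Tendsto (fun j => f j ⬝ᵥ g j) Filter.atTop (nhds (a ⬝ᵥ c)) := by
  simp only [dotProduct]
  exact tendsto_finset_sum _ fun i _ =>
    ((tendsto_pi_nhds.1 hf i).mul (tendsto_pi_nhds.1 hg i))

private lemma tendsto_mulVec' {ι κ : Type*} [Fintype ι] [Fintype κ]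
    (M : Matrix ι κ ℝ) {f : ℕ → κ → ℝ} {a : κ → ℝ}
    (hf : Filter.Tendsto f Filter.atTop (nhds a)) :
    Filter.Tendsto (fun j => M *ᵥ f j) Filter.atTop (nhds (M *ᵥ a)) := by
  rw [tendsto_pi_nhds]
  intro i
  simpa [Matrix.mulVec] using tendsto_dot' (f := fun _ => M i) tendsto_const_nhds hf

/-- Limit-passing argument establishing Theorem 3.3: any accumulation point of the
predictor sequence solves the variational inequality when the residuals vanish. -/
theorem stmt_16 {n1 n2 m : ℕ}
    (A : Matrix (Fin m) (Fin n1) ℝ) (B : Matrix (Fin m) (Fin n2) ℝ) (b : Fin m → ℝ)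
    (X : Set (Fin n1 → ℝ)) (Y : Set (Fin n2 → ℝ)) (hX : IsClosed X) (hY : IsClosed Y)
    (θ : (Fin n1 → ℝ) → (Fin n2 → ℝ) → ℝ)
    (hθ : Continuous fun p : (Fin n1 → ℝ) × (Fin n2 → ℝ) => θ p.1 p.2)
    (xt : ℕ → Fin n1 → ℝ) (yt : ℕ → Fin n2 → ℝ) (lt : ℕ → Fin m → ℝ)
    (hxtX : ∀ j, xt j ∈ X) (hytY : ∀ j, yt j ∈ Y)
    (xinf : Fin n1 → ℝ) (yinf : Fin n2 → ℝ) (linf : Fin m → ℝ)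
    (hx : Filter.Tendsto xt Filter.atTop (nhds xinf))
    (hy : Filter.Tendsto yt Filter.atTop (nhds yinf))
    (hl : Filter.Tendsto lt Filter.atTop (nhds linf))
    (rj : ℕ → Fin n2 ⊕ Fin m → ℝ) (hr : Filter.Tendsto rj Filter.atTop (nhds 0))
    (Qj : ℕ → Matrix (Fin n2 ⊕ Fin m) (Fin n2 ⊕ Fin m) ℝ) (C : ℝ)
    (hQ : ∀ j (v : Fin n2 ⊕ Fin m → ℝ),
      Real.sqrt ((Qj j *ᵥ v) ⬝ᵥ (Qj j *ᵥ v)) ≤ C * Real.sqrt (v ⬝ᵥ v))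
    (hVI : ∀ j, ∀ x ∈ X, ∀ y ∈ Y, ∀ l : Fin m → ℝ,
      θ x y - θ (xt j) (yt j)
        + ((x - xt j) ⬝ᵥ (-(Aᵀ *ᵥ lt j)) + (y - yt j) ⬝ᵥ (-(Bᵀ *ᵥ lt j))
          + (l - lt j) ⬝ᵥ (A *ᵥ xt j + B *ᵥ yt j - b))
      ≥ (Sum.elim (y - yt j) (l - lt j)) ⬝ᵥ (Qj j *ᵥ rj j)) :
    xinf ∈ X ∧ yinf ∈ Y ∧ ∀ x ∈ X, ∀ y ∈ Y, ∀ l : Fin m → ℝ,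
      θ x y - θ xinf yinf
        + ((x - xinf) ⬝ᵥ (-(Aᵀ *ᵥ linf)) + (y - yinf) ⬝ᵥ (-(Bᵀ *ᵥ linf))
          + (l - linf) ⬝ᵥ (A *ᵥ xinf + B *ᵥ yinf - b)) ≥ 0 := by
  have hxinf : xinf ∈ X := hX.mem_of_tendsto hx (Filter.Eventually.of_forall hxtX)
  have hyinf : yinf ∈ Y := hY.mem_of_tendsto hy (Filter.Eventually.of_forall hytY)
  refine ⟨hxinf, hyinf, ?_⟩
  intro x hx' y hy' l
  -- the residual vector tends to 0
  have hrr : Filter.Tendsto (fun j => rj j ⬝ᵥ rj j) Filter.atTop (nhds 0) := by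
    simpa using tendsto_dot' hr hr
  have hsqrt : Filter.Tendsto (fun j => C * Real.sqrt (rj j ⬝ᵥ rj j))
      Filter.atTop (nhds 0) := by
    have := (Real.continuous_sqrt.tendsto 0).comp hrr
    simpa using this.const_mul C
  have hs : Filter.Tendsto
      (fun j => Real.sqrt ((Qj j *ᵥ rj j) ⬝ᵥ (Qj j *ᵥ rj j))) Filter.atTop (nhds 0) :=
    squeeze_zero (fun j => Real.sqrt_nonneg _) (fun j => hQ j (rj j)) hsqrt
  have hw : Filter.Tendsto (fun j => Qj j *ᵥ rj j) Filter.atTop (nhds 0) := by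
    rw [tendsto_pi_nhds]
    intro i
    have hb : ∀ j, ‖(Qj j *ᵥ rj j) i‖ ≤
        Real.sqrt ((Qj j *ᵥ rj j) ⬝ᵥ (Qj j *ᵥ rj j)) := by
      intro j
      have h1 : ((Qj j *ᵥ rj j) i) ^ 2 ≤ (Qj j *ᵥ rj j) ⬝ᵥ (Qj j *ᵥ rj j) := by
        simp only [dotProduct, ← sq]
        exact Finset.single_le_sum (f := fun k => ((Qj j *ᵥ rj j) k) ^ 2) (fun k _ => sq_nonneg _) (Finset.mem_univ i)
      calc ‖(Qj j *ᵥ rj j) i‖ = Real.sqrt (((Qj j *ᵥ rj j) i) ^ 2) := by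
            rw [Real.sqrt_sq_eq_abs]; rfl
        _ ≤ _ := Real.sqrt_le_sqrt h1
    simpa using squeeze_zero_norm hb hs
  -- RHS tends to 0
  have hyl : Filter.Tendsto (fun j => Sum.elim (y - yt j) (l - lt j))
      Filter.atTop (nhds (Sum.elim (y - yinf) (l - linf))) := by
    rw [tendsto_pi_nhds]
    rintro (k | k)
    · exact (tendsto_const_nhds.sub (tendsto_pi_nhds.1 hy k))
    · exact (tendsto_const_nhds.sub (tendsto_pi_nhds.1 hl k))
  have hR : Filter.Tendsto
      (fun j => (Sum.elim (y - yt j) (l - lt j)) ⬝ᵥ (Qj j *ᵥ rj j))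
      Filter.atTop (nhds 0) := by
    simpa using tendsto_dot' hyl hw
  -- LHS tends to its limit
  have hθt : Filter.Tendsto (fun j => θ (xt j) (yt j)) Filter.atTop
      (nhds (θ xinf yinf)) :=
    (hθ.tendsto (xinf, yinf)).comp (hx.prodMk_nhds hy)
  have hL : Filter.Tendsto
      (fun j => θ x y - θ (xt j) (yt j)
        + ((x - xt j) ⬝ᵥ (-(Aᵀ *ᵥ lt j)) + (y - yt j) ⬝ᵥ (-(Bᵀ *ᵥ lt j))
          + (l - lt j) ⬝ᵥ (A *ᵥ xt j + B *ᵥ yt j - b)))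
      Filter.atTop
      (nhds (θ x y - θ xinf yinf
        + ((x - xinf) ⬝ᵥ (-(Aᵀ *ᵥ linf)) + (y - yinf) ⬝ᵥ (-(Bᵀ *ᵥ linf))
          + (l - linf) ⬝ᵥ (A *ᵥ xinf + B *ᵥ yinf - b)))) := by
    refine (tendsto_const_nhds.sub hθt).add (Filter.Tendsto.add (Filter.Tendsto.add ?_ ?_) ?_)
    · exact tendsto_dot' (tendsto_const_nhds.sub hx) (tendsto_mulVec' Aᵀ hl).neg
    · exact tendsto_dot' (tendsto_const_nhds.sub hy) (tendsto_mulVec' Bᵀ hl).neg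
    · exact tendsto_dot' (tendsto_const_nhds.sub hl)
        (((tendsto_mulVec' A hx).add (tendsto_mulVec' B hy)).sub tendsto_const_nhds)
  exact le_of_tendsto_of_tendsto' hR hL (fun j => hVI j x hx' y hy' l)
end
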